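/- arXiv:math/0403280 — 2 statements merged into one kernel-verified Lean document; each statement's English description precedes it below -/
import Mathlib

section
/- Let A = Σ{A_{ij} | i,j ∈ I} be the generalized matrix ring of a Γ_I-system. Then the Baer radical of the ring A, the radical g.m.r_b(A), and the upper radical \bar r_b(A) all coincide and are equal, componentwise, to the direct sum Σ{r_b(A_{ij}) | i,j ∈ I}; in particular, an element x = (x_{ij}) of A lies in the Baer radical r_b(A) of the ring A if and only if x_{ij} ∈ r_b(A_{ij}) for all i,j ∈ I. -/
/-!
Generalized matrix rings (g.m.rings) of a `Γ_I`-system, their g.m.ideals,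
g.m.homomorphisms, quotients, and the general theory of radicals,
following Zhang, "The Baer radical of generalized matrix rings".
-/

universe u v w

set_option autoImplicit false
set_option maxHeartbeats 1000000

/-- A `Γ_I`-system: a family of additive abelian groups `A i j` (`i j : I`)
with multiplications `A i j × A j k → A i k`, additive in each variable and
associative. -/
structure GammaSystem (I : Type u) where
  A : I → I → Type v
  [inst : ∀ i j, AddCommGroup (A i j)]
  mul : ∀ {i j k : I}, A i j → A j k → A i k
  add_mul : ∀ {i j k : I} (x y : A i j) (z : A j k), mul (x + y) z = mul x z + mul y z
  mul_add : ∀ {i j k : I} (w : A i j) (x y : A j k), mul w (x + y) = mul w x + mul w y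
  mul_assoc : ∀ {l i j k : I} (w : A l i) (x : A i j) (z : A j k),
    mul w (mul x z) = mul (mul w x) z

attribute [instance] GammaSystem.inst

variable {I : Type u}

/-- The generalized matrix ring `A = Σ{A_{ij} | i,j ∈ I}` of a `Γ_I`-system:
the external direct sum `⨁_{(i,j)} A i j` (finitely supported families). -/
abbrev GMRing (S : GammaSystem I) : Type (max u v) := Π₀ p : I × I, S.A p.1 p.2

namespace GammaSystem

variable (S : GammaSystem I)

lemma zero_mul' {i j k : I} (z : S.A j k) : S.mul (0 : S.A i j) z = 0 := by
  have h := S.add_mul (0 : S.A i j) 0 z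
  rw [add_zero] at h
  exact (add_eq_left.mp h.symm)

lemma mul_zero' {i j k : I} (w : S.A i j) : S.mul w (0 : S.A j k) = 0 := by
  have h := S.mul_add w (0 : S.A j k) 0
  rw [add_zero] at h
  exact (add_eq_left.mp h.symm)

lemma neg_mul' {i j k : I} (x : S.A i j) (z : S.A j k) :
    S.mul (-x) z = -(S.mul x z) := by
  have h := S.add_mul x (-x) z
  rw [add_neg_cancel, S.zero_mul'] at h
  exact (neg_eq_of_add_eq_zero_right h.symm).symm

lemma mul_neg' {i j k : I} (w : S.A i j) (x : S.A j k) :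
    S.mul w (-x) = -(S.mul w x) := by
  have h := S.mul_add w x (-x)
  rw [add_neg_cancel, S.mul_zero'] at h
  exact (neg_eq_of_add_eq_zero_right h.symm).symm

-- Multiplication of generalized matrices: `(x*y)_{ij} = ∑_k x_{ik} y_{kj}`.
open Classical in
noncomputable def gmul (x y : GMRing S) : GMRing S :=
  x.sum fun p a => y.sum fun q b =>
    if h : p.2 = q.1 then
      DFinsupp.single (p.1, q.2)
        (S.mul a (cast (congrArg (fun t => S.A t q.2) h.symm) b))
    else 0

open Classical in
lemma gmul_inner_zero (p : I × I) (a : S.A p.1 p.2) (q : I × I) :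
    (if h : p.2 = q.1 then
      DFinsupp.single (p.1, q.2)
        (S.mul a (cast (congrArg (fun t => S.A t q.2) h.symm) (0 : S.A q.1 q.2)))
    else (0 : GMRing S)) = (0 : GMRing S) := by
  obtain ⟨p1, p2⟩ := p
  obtain ⟨q1, q2⟩ := q
  by_cases h : p2 = q1
  · subst h
    simp [S.mul_zero']
  · simp [h]

open Classical in
lemma gmul_inner_add (p : I × I) (a : S.A p.1 p.2) (q : I × I) (b₁ b₂ : S.A q.1 q.2) :
    (if h : p.2 = q.1 then
      DFinsupp.single (p.1, q.2)
        (S.mul a (cast (congrArg (fun t => S.A t q.2) h.symm) (b₁ + b₂)))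
    else (0 : GMRing S)) =
    (if h : p.2 = q.1 then
      DFinsupp.single (p.1, q.2)
        (S.mul a (cast (congrArg (fun t => S.A t q.2) h.symm) b₁))
    else (0 : GMRing S)) +
    (if h : p.2 = q.1 then
      DFinsupp.single (p.1, q.2)
        (S.mul a (cast (congrArg (fun t => S.A t q.2) h.symm) b₂))
    else (0 : GMRing S)) := by
  obtain ⟨p1, p2⟩ := p
  obtain ⟨q1, q2⟩ := q
  by_cases h : p2 = q1
  · subst h
    simp [S.mul_add, DFinsupp.single_add]
  · simp [h]

open Classical in
lemma gmul_add (x y z : GMRing S) : S.gmul x (y + z) = S.gmul x y + S.gmul x z := by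
  unfold gmul
  have : ∀ (p : I × I) (a : S.A p.1 p.2),
      (y + z).sum (fun q b =>
        if h : p.2 = q.1 then
          DFinsupp.single (p.1, q.2)
            (S.mul a (cast (congrArg (fun t => S.A t q.2) h.symm) b))
        else (0 : GMRing S)) =
      y.sum (fun q b =>
        if h : p.2 = q.1 then
          DFinsupp.single (p.1, q.2)
            (S.mul a (cast (congrArg (fun t => S.A t q.2) h.symm) b))
        else (0 : GMRing S)) +
      z.sum (fun q b =>
        if h : p.2 = q.1 then
          DFinsupp.single (p.1, q.2)
            (S.mul a (cast (congrArg (fun t => S.A t q.2) h.symm) b))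
        else (0 : GMRing S)) := by
    intro p a
    exact DFinsupp.sum_add_index (fun q => S.gmul_inner_zero p a q)
      (fun q b₁ b₂ => S.gmul_inner_add p a q b₁ b₂)
  calc x.sum (fun p a => (y + z).sum fun q b =>
        if h : p.2 = q.1 then
          DFinsupp.single (p.1, q.2)
            (S.mul a (cast (congrArg (fun t => S.A t q.2) h.symm) b))
        else (0 : GMRing S))
      = x.sum (fun p a =>
          (y.sum fun q b =>
            if h : p.2 = q.1 then
              DFinsupp.single (p.1, q.2)
                (S.mul a (cast (congrArg (fun t => S.A t q.2) h.symm) b))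
            else (0 : GMRing S)) +
          (z.sum fun q b =>
            if h : p.2 = q.1 then
              DFinsupp.single (p.1, q.2)
                (S.mul a (cast (congrArg (fun t => S.A t q.2) h.symm) b))
            else (0 : GMRing S))) := by
        exact congrArg (DFinsupp.sum x) (funext fun p => funext fun a => this p a)
    _ = _ := DFinsupp.sum_add

open Classical in
lemma add_gmul (x y z : GMRing S) : S.gmul (x + y) z = S.gmul x z + S.gmul y z := by
  unfold gmul
  refine DFinsupp.sum_add_index (fun p => ?_) (fun p a₁ a₂ => ?_)
  · have : (fun (q : I × I) (b : S.A q.1 q.2) =>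
        (if h : p.2 = q.1 then
          DFinsupp.single (p.1, q.2)
            (S.mul (0 : S.A p.1 p.2) (cast (congrArg (fun t => S.A t q.2) h.symm) b))
        else (0 : GMRing S))) = fun q b => (0 : GMRing S) := by
      funext q b
      obtain ⟨p1, p2⟩ := p
      obtain ⟨q1, q2⟩ := q
      by_cases h : p2 = q1
      · subst h; simp [S.zero_mul']
      · simp [h]
    rw [congrArg (DFinsupp.sum z) this, DFinsupp.sum_zero]
  · have : (fun (q : I × I) (b : S.A q.1 q.2) =>
        (if h : p.2 = q.1 then
          DFinsupp.single (p.1, q.2)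
            (S.mul (a₁ + a₂) (cast (congrArg (fun t => S.A t q.2) h.symm) b))
        else (0 : GMRing S))) = fun q b =>
        (if h : p.2 = q.1 then
          DFinsupp.single (p.1, q.2)
            (S.mul a₁ (cast (congrArg (fun t => S.A t q.2) h.symm) b))
        else (0 : GMRing S)) +
        (if h : p.2 = q.1 then
          DFinsupp.single (p.1, q.2)
            (S.mul a₂ (cast (congrArg (fun t => S.A t q.2) h.symm) b))
        else (0 : GMRing S)) := by
      funext q b
      obtain ⟨p1, p2⟩ := p
      obtain ⟨q1, q2⟩ := q
      by_cases h : p2 = q1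
      · subst h; simp [S.add_mul, DFinsupp.single_add]
      · simp [h]
    rw [congrArg (DFinsupp.sum z) this, DFinsupp.sum_add]

open Classical in
lemma zero_gmul (y : GMRing S) : S.gmul 0 y = 0 := by
  unfold gmul
  exact DFinsupp.sum_zero_index

open Classical in
lemma gmul_zero (x : GMRing S) : S.gmul x 0 = 0 := by
  unfold gmul
  have : (fun (p : I × I) (a : S.A p.1 p.2) =>
      DFinsupp.sum (0 : GMRing S) (fun q b =>
        if h : p.2 = q.1 then
          DFinsupp.single (p.1, q.2)
            (S.mul a (cast (congrArg (fun t => S.A t q.2) h.symm) b))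
        else (0 : GMRing S))) = fun p a => (0 : GMRing S) := by
    funext p a
    exact DFinsupp.sum_zero_index
  rw [congrArg (DFinsupp.sum x) this, DFinsupp.sum_zero]

open Classical in
lemma gmul_single (p : I × I) (a : S.A p.1 p.2) (y : GMRing S) :
    S.gmul (DFinsupp.single p a) y =
      y.sum fun q b =>
        if h : p.2 = q.1 then
          DFinsupp.single (p.1, q.2)
            (S.mul a (cast (congrArg (fun t => S.A t q.2) h.symm) b))
        else 0 := by
  unfold gmul
  refine DFinsupp.sum_single_index ?_
  have : (fun (q : I × I) (b : S.A q.1 q.2) =>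
      (if h : p.2 = q.1 then
        DFinsupp.single (p.1, q.2)
          (S.mul (0 : S.A p.1 p.2) (cast (congrArg (fun t => S.A t q.2) h.symm) b))
      else (0 : GMRing S))) = fun q b => (0 : GMRing S) := by
    funext q b
    obtain ⟨p1, p2⟩ := p; obtain ⟨q1, q2⟩ := q
    by_cases h : p2 = q1
    · subst h; simp [S.zero_mul']
    · simp [h]
  rw [congrArg (DFinsupp.sum y) this, DFinsupp.sum_zero]

open Classical in
lemma gmul_single_single (p q : I × I) (a : S.A p.1 p.2) (b : S.A q.1 q.2) :
    S.gmul (DFinsupp.single p a) (DFinsupp.single q b) =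
      if h : p.2 = q.1 then
        DFinsupp.single (p.1, q.2)
          (S.mul a (cast (congrArg (fun t => S.A t q.2) h.symm) b))
      else 0 := by
  rw [S.gmul_single]
  exact DFinsupp.sum_single_index (S.gmul_inner_zero p a q)

open Classical in
lemma gmul_single_assoc (p q r : I × I) (a : S.A p.1 p.2) (b : S.A q.1 q.2)
    (c : S.A r.1 r.2) :
    S.gmul (S.gmul (DFinsupp.single p a) (DFinsupp.single q b)) (DFinsupp.single r c) =
    S.gmul (DFinsupp.single p a) (S.gmul (DFinsupp.single q b) (DFinsupp.single r c)) := by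
  obtain ⟨p1, p2⟩ := p; obtain ⟨q1, q2⟩ := q; obtain ⟨r1, r2⟩ := r
  by_cases h1 : p2 = q1
  · subst h1
    by_cases h2 : q2 = r1
    · subst h2
      rw [S.gmul_single_single (p1, p2) (p2, q2) a b, dif_pos rfl,
        S.gmul_single_single (p2, q2) (q2, r2) b c, dif_pos rfl,
        S.gmul_single_single (p1, q2) (q2, r2) _ c, dif_pos rfl,
        S.gmul_single_single (p1, p2) (p2, r2) a _, dif_pos rfl]
      show DFinsupp.single (p1, r2) _ = DFinsupp.single (p1, r2) _
      rw [show (cast (congrArg (fun t => S.A t q2) (Eq.symm rfl)) b) = b from rfl,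
        show (cast (congrArg (fun t => S.A t r2) (Eq.symm rfl)) c) = c from rfl]
      exact congrArg _ (S.mul_assoc a b c).symm
    · rw [S.gmul_single_single (p1, p2) (p2, q2) a b, dif_pos rfl,
        S.gmul_single_single (p2, q2) (r1, r2) b c, dif_neg h2,
        S.gmul_single_single (p1, q2) (r1, r2) _ c, dif_neg h2, S.gmul_zero]
  · by_cases h2 : q2 = r1
    · subst h2
      rw [S.gmul_single_single (p1, p2) (q1, q2) a b, dif_neg h1,
        S.gmul_single_single (q1, q2) (q2, r2) b c, dif_pos rfl,
        S.gmul_single_single (p1, p2) (q1, r2) a _, dif_neg h1, S.zero_gmul]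
    · rw [S.gmul_single_single (p1, p2) (q1, q2) a b, dif_neg h1,
        S.gmul_single_single (q1, q2) (r1, r2) b c, dif_neg h2,
        S.zero_gmul, S.gmul_zero]

open Classical in
lemma gmul_single_single_assoc' (p q : I × I) (a : S.A p.1 p.2) (b : S.A q.1 q.2)
    (z : GMRing S) :
    S.gmul (S.gmul (DFinsupp.single p a) (DFinsupp.single q b)) z =
    S.gmul (DFinsupp.single p a) (S.gmul (DFinsupp.single q b) z) := by
  induction z using DFinsupp.induction with
  | h0 => simp only [S.gmul_zero, S.zero_gmul]
  | ha r c f hf hc ih =>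
      rw [S.gmul_add, S.gmul_add, S.gmul_add, ih, S.gmul_single_assoc]

open Classical in
lemma gmul_single_assoc'' (p : I × I) (a : S.A p.1 p.2) (y z : GMRing S) :
    S.gmul (S.gmul (DFinsupp.single p a) y) z =
    S.gmul (DFinsupp.single p a) (S.gmul y z) := by
  induction y using DFinsupp.induction with
  | h0 => simp only [S.gmul_zero, S.zero_gmul]
  | ha q b f hf hb ih =>
      rw [S.gmul_add, S.add_gmul, S.add_gmul, S.gmul_add, ih,
        S.gmul_single_single_assoc']

open Classical in
lemma gmul_assoc (x y z : GMRing S) :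
    S.gmul (S.gmul x y) z = S.gmul x (S.gmul y z) := by
  induction x using DFinsupp.induction with
  | h0 => simp only [S.gmul_zero, S.zero_gmul]
  | ha p a f hf ha ih =>
      rw [S.add_gmul, S.add_gmul, S.add_gmul, ih, S.gmul_single_assoc'']

noncomputable instance : NonUnitalNonAssocRing (GMRing S) :=
  { (inferInstance : AddCommGroup (GMRing S)) with
    mul := S.gmul
    left_distrib := S.gmul_add
    right_distrib := fun x y z => S.add_gmul x y z
    zero_mul := S.zero_gmul
    mul_zero := S.gmul_zero }

/-- The generalized matrix ring is a (possibly non-unital) associative ring. -/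
noncomputable instance : NonUnitalRing (GMRing S) :=
  { (inferInstance : NonUnitalNonAssocRing (GMRing S)) with
    mul_assoc := S.gmul_assoc }

/-- A `Γ_I`-system (g.m.ring) is zero if all its components are zero. -/
def IsZero : Prop := ∀ (i j : I) (x : S.A i j), x = 0

/-- `x ∈ A_{ij}` is `m`-nilpotent in the `A_{ji}`-ring `A_{ij}`: every
`m`-sequence `a_{n+1} = a_n u_n a_n` (`u_n ∈ A_{ji}`) with `a_1 = x`
satisfies `a_k = 0` for some `k`. -/
def MNilpotent (i j : I) (x : S.A i j) : Prop :=
  ∀ a : ℕ → S.A i j, a 0 = x →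
    (∀ n, ∃ u : S.A j i, a (n + 1) = S.mul (S.mul (a n) u) (a n)) →
    ∃ k, a k = 0

/-- The Baer radical `r_b(A_{ij})` of the `A_{ji}`-ring `A_{ij}`: the set of
its `m`-nilpotent elements. -/
def componentBaer (i j : I) : Set (S.A i j) := { x | S.MNilpotent i j x }

end GammaSystem

section RingNotions

variable (R : Type w) [NonUnitalRing R]

/-- A two-sided ideal `P` of a (possibly non-unital) ring is prime if
`BC ⊆ P` implies `B ⊆ P` or `C ⊆ P`. -/
def TwoSidedIdeal.IsPrimeIdeal {R : Type w} [NonUnitalRing R]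
    (P : TwoSidedIdeal R) : Prop :=
  ∀ B C : TwoSidedIdeal R, (∀ b ∈ B, ∀ c ∈ C, b * c ∈ P) → B ≤ P ∨ C ≤ P

/-- The Baer radical of a (possibly non-unital) ring: the intersection of all
prime two-sided ideals. -/
def baerRadical : Set R := { x | ∀ P : TwoSidedIdeal R, P.IsPrimeIdeal → x ∈ P }

/-- `x` is an `m`-nilpotent element of the ring `R`: every `m`-sequence
`a_{n+1} = a_n u_n a_n` (`u_n ∈ R`) with `a_1 = x` reaches `0`. -/
def IsMNilpotent {R : Type w} [NonUnitalRing R] (x : R) : Prop :=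
  ∀ a : ℕ → R, a 0 = x → (∀ n, ∃ u : R, a (n + 1) = a n * u * a n) → ∃ k, a k = 0

/-- `x` is `m`-nilpotent in the subring given by the subset `T` of `R`:
every `m`-sequence lying in `T`, with multipliers `u_n ∈ T`, starting at `x`,
reaches `0`. -/
def IsMNilpotentIn {R : Type w} [NonUnitalRing R] (T : Set R) (x : R) : Prop :=
  ∀ a : ℕ → R, (∀ n, a n ∈ T) → a 0 = x →
    (∀ n, ∃ u ∈ T, a (n + 1) = a n * u * a n) → ∃ k, a k = 0

/-- A ring is prime if `BC = 0` implies `B = 0` or `C = 0` for all two-sided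
ideals `B, C`. -/
def IsPrimeRing : Prop :=
  ∀ B C : TwoSidedIdeal R, (∀ b ∈ B, ∀ c ∈ C, b * c = 0) → B = ⊥ ∨ C = ⊥

/-- A ring is semiprime if `B·B = 0` implies `B = 0` for every two-sided
ideal `B`. -/
def IsSemiprimeRing : Prop :=
  ∀ B : TwoSidedIdeal R, (∀ x ∈ B, ∀ y ∈ B, x * y = 0) → B = ⊥

/-- The annihilator `B* = {x ∈ R | xB = Bx = 0}` of a two-sided ideal. -/
def TwoSidedIdeal.annihilator {R : Type w} [NonUnitalRing R]
    (B : TwoSidedIdeal R) : TwoSidedIdeal R :=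
  TwoSidedIdeal.mk' { x | ∀ b ∈ B, x * b = 0 ∧ b * x = 0 }
    (fun b hb => ⟨zero_mul b, mul_zero b⟩)
    (fun {x y} hx hy b hb =>
      ⟨by rw [add_mul, (hx b hb).1, (hy b hb).1, add_zero],
       by rw [mul_add, (hx b hb).2, (hy b hb).2, add_zero]⟩)
    (fun {x} hx b hb =>
      ⟨by rw [neg_mul, (hx b hb).1, neg_zero],
       by rw [mul_neg, (hx b hb).2, neg_zero]⟩)
    (fun {x y} hy b hb => by
      refine ⟨?_, ?_⟩
      · rw [mul_assoc, (hy b hb).1, mul_zero]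
      · rw [← mul_assoc]
        exact (hy (b * x) (B.mul_mem_right b x hb)).2)
    (fun {x y} hx b hb => by
      refine ⟨?_, ?_⟩
      · rw [mul_assoc]
        exact (hx (y * b) (B.mul_mem_left y b hb)).1
      · rw [← mul_assoc, (hx b hb).2, zero_mul])

end RingNotions

/-- A g.m.ideal of the g.m.ring of `S`: a family of additive subgroups
`B i j ≤ A i j` with `B_{ij} A_{jk} ⊆ B_{ik}` and `A_{ij} B_{jk} ⊆ B_{ik}`. -/
structure GMIdeal (S : GammaSystem I) where
  B : ∀ i j : I, AddSubgroup (S.A i j)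
  mul_mem_right : ∀ {i j k : I} (x : S.A i j) (z : S.A j k), x ∈ B i j → S.mul x z ∈ B i k
  mul_mem_left : ∀ {i j k : I} (x : S.A i j) (z : S.A j k), z ∈ B j k → S.mul x z ∈ B i k

namespace GMIdeal

variable {S : GammaSystem I} (N : GMIdeal S)

/-- The subset of the g.m.ring consisting of the generalized matrices all of
whose components lie in the g.m.ideal `N`. -/
def carrier : Set (GMRing S) := { x | ∀ p : I × I, x p ∈ N.B p.1 p.2 }

/-- A g.m.ideal is zero if all its components are the zero subgroup. -/
def IsZero : Prop := ∀ i j : I, N.B i j = ⊥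

/-- A g.m.ideal regarded as a g.m.ring (a `Γ_I`-system) in its own right. -/
def toSystem : GammaSystem I where
  A i j := N.B i j
  inst i j := inferInstance
  mul {i j k} x z := ⟨S.mul x.1 z.1, N.mul_mem_right x.1 z.1 x.2⟩
  add_mul x y z := Subtype.ext (S.add_mul x.1 y.1 z.1)
  mul_add w x y := Subtype.ext (S.mul_add w.1 x.1 y.1)
  mul_assoc w x z := Subtype.ext (S.mul_assoc w.1 x.1 z.1)

/-- The quotient g.m.ring `A//B`, with components `A_{ij}/B_{ij}`. -/
def quotSystem : GammaSystem I where
  A i j := S.A i j ⧸ N.B i j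
  inst i j := inferInstance
  mul {i j k} x z :=
    Quotient.liftOn₂' x z
      (fun a b => ((S.mul a b : S.A i k) : S.A i k ⧸ N.B i k))
      (by
        intro a₁ a₂ b₁ b₂ h₁ h₂
        replace h₁ := (QuotientAddGroup.leftRel_apply).mp h₁
        replace h₂ := (QuotientAddGroup.leftRel_apply).mp h₂
        refine (QuotientAddGroup.eq).mpr ?_
        have : -(S.mul a₁ a₂) + S.mul b₁ b₂ =
            S.mul (-a₁ + b₁) a₂ + S.mul b₁ (-a₂ + b₂) := by
          rw [S.add_mul, S.mul_add, S.neg_mul', S.mul_neg']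
          abel
        rw [this]
        exact add_mem (N.mul_mem_right _ _ h₁) (N.mul_mem_left _ _ h₂))
  add_mul {i j k} x y z := by
    refine Quotient.inductionOn₃' x y z ?_
    intro a b c
    show ((S.mul (a + b) c : S.A i k) : S.A i k ⧸ N.B i k) = _
    rw [S.add_mul]
    rfl
  mul_add {i j k} w x y := by
    refine Quotient.inductionOn₃' w x y ?_
    intro a b c
    show ((S.mul a (b + c) : S.A i k) : S.A i k ⧸ N.B i k) = _
    rw [S.mul_add]
    rfl
  mul_assoc {l i j k} w x z := by
    refine Quotient.inductionOn₃' w x z ?_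
    intro a b c
    show ((S.mul a (S.mul b c) : S.A l k) : S.A l k ⧸ N.B l k) = _
    rw [S.mul_assoc]
    rfl

/-- The annihilator g.m.ideal `B* = {x ∈ A | xB = Bx = 0}` of a g.m.ideal. -/
def ann : GMIdeal S where
  B i j :=
    { carrier := { x | (∀ (k : I) (b : S.A j k), b ∈ N.B j k → S.mul x b = 0) ∧
        (∀ (k : I) (b : S.A k i), b ∈ N.B k i → S.mul b x = 0) }
      add_mem' := by
        rintro x y ⟨hx₁, hx₂⟩ ⟨hy₁, hy₂⟩
        refine ⟨fun k b hb => ?_, fun k b hb => ?_⟩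
        · rw [S.add_mul, hx₁ k b hb, hy₁ k b hb, add_zero]
        · rw [S.mul_add, hx₂ k b hb, hy₂ k b hb, add_zero]
      zero_mem' := ⟨fun k b _ => S.zero_mul' b, fun k b _ => S.mul_zero' b⟩
      neg_mem' := by
        rintro x ⟨hx₁, hx₂⟩
        refine ⟨fun k b hb => ?_, fun k b hb => ?_⟩
        · rw [S.neg_mul', hx₁ k b hb, neg_zero]
        · rw [S.mul_neg', hx₂ k b hb, neg_zero] }
  mul_mem_right := by
    rintro i j k x z ⟨hx₁, hx₂⟩
    refine ⟨fun m b hb => ?_, fun m b hb => ?_⟩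
    · rw [← S.mul_assoc]
      exact hx₁ m (S.mul z b) (N.mul_mem_left z b hb)
    · rw [S.mul_assoc, hx₂ m b hb, S.zero_mul']
  mul_mem_left := by
    rintro i j k x z ⟨hz₁, hz₂⟩
    refine ⟨fun m b hb => ?_, fun m b hb => ?_⟩
    · rw [← S.mul_assoc, hz₁ m b hb, S.mul_zero']
    · rw [S.mul_assoc]
      exact hz₂ m (S.mul b x) (N.mul_mem_right b x hb)

/-- `N` is a "Baer radical" g.m.ideal: every element of the ring `N` is
`m`-nilpotent in the ring `N`. -/
def IsBaerGMIdeal : Prop := ∀ x ∈ N.carrier, IsMNilpotentIn N.carrier x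

end GMIdeal

/-- A g.m.homomorphism between two g.m.rings over the same index set. -/
structure GMHom (S T : GammaSystem I) where
  f : ∀ i j : I, S.A i j → T.A i j
  map_add : ∀ {i j : I} (x y : S.A i j), f i j (x + y) = f i j x + f i j y
  map_mul : ∀ {i j k : I} (x : S.A i j) (z : S.A j k),
    f i k (S.mul x z) = T.mul (f i j x) (f j k z)

/-- A g.m.homomorphism is surjective if each component map is onto. -/
def GMHom.Surjective {S T : GammaSystem I} (ψ : GMHom S T) : Prop :=
  ∀ i j : I, Function.Surjective (ψ.f i j)

/-- The componentwise intersection `\bar r_b(A)` of all g.m.ideals `B` of `A`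
such that the quotient ring `A//B` is a prime ring. -/
def gmBarBaer (S : GammaSystem I) : Set (GMRing S) :=
  { x | ∀ B : GMIdeal S, IsPrimeRing (GMRing B.quotSystem) →
      ∀ p : I × I, x p ∈ B.B p.1 p.2 }

section RadicalTheory

/-- `N` is the largest g.m.ideal of `S` belonging (as a g.m.ring) to the
class `r`. -/
def IsLargestRadicalIdeal (r : ∀ I₀ : Type u, GammaSystem.{u, v} I₀ → Prop)
    {I : Type u} (S : GammaSystem I) (N : GMIdeal S) : Prop :=
  r I N.toSystem ∧ ∀ M : GMIdeal S, r I M.toSystem → ∀ i j : I, M.B i j ≤ N.B i j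

/-- `r` is a radical property of g.m.rings: (R1) closure under surjective
g.m.homomorphic images; (R2) every g.m.ring has a largest `r`-g.m.ideal `r(A)`;
(R3) `A//r(A)` has no non-zero `r`-g.m.ideal. -/
def IsGMRadicalProperty (r : ∀ I₀ : Type u, GammaSystem.{u, v} I₀ → Prop) : Prop :=
  (∀ (I₀ : Type u) (S T : GammaSystem I₀) (ψ : GMHom S T),
      ψ.Surjective → r I₀ S → r I₀ T) ∧
  (∀ (I₀ : Type u) (S : GammaSystem I₀), ∃ N : GMIdeal S,
      IsLargestRadicalIdeal r S N ∧
      ∀ P : GMIdeal N.quotSystem, r I₀ P.toSystem → P.IsZero)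

/-- `S` is `r`-semisimple: `r(S) = 0`, i.e. every `r`-g.m.ideal of `S` is zero. -/
def GMSemisimple (r : ∀ I₀ : Type u, GammaSystem.{u, v} I₀ → Prop)
    {I : Type u} (S : GammaSystem I) : Prop :=
  ∀ N : GMIdeal S, r I N.toSystem → N.IsZero

/-- `S` can be g.m.homomorphically mapped onto a non-zero member of the
class `K`. -/
def MapsOntoNonzeroMember (K : ∀ I₀ : Type u, GammaSystem.{u, v} I₀ → Prop)
    {I : Type u} (S : GammaSystem I) : Prop :=
  ∃ (T : GammaSystem.{u, v} I) (ψ : GMHom S T),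
    ψ.Surjective ∧ ¬ T.IsZero ∧ K I T

/-- Condition (Q1): every non-zero g.m.ideal of any member of `K` can be
g.m.homomorphically mapped onto a non-zero member of `K`. -/
def Q1Cond (K : ∀ I₀ : Type u, GammaSystem.{u, v} I₀ → Prop) : Prop :=
  ∀ (I₀ : Type u) (S : GammaSystem I₀), K I₀ S →
    ∀ N : GMIdeal S, ¬ N.IsZero → MapsOntoNonzeroMember K N.toSystem

/-- Condition (Q2): if every non-zero g.m.ideal of `A` can be
g.m.homomorphically mapped onto a non-zero member of `K`, then `A ∈ K`. -/
def Q2Cond (K : ∀ I₀ : Type u, GammaSystem.{u, v} I₀ → Prop) : Prop :=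
  ∀ (I₀ : Type u) (S : GammaSystem I₀),
    (∀ N : GMIdeal S, ¬ N.IsZero → MapsOntoNonzeroMember K N.toSystem) → K I₀ S

/-- The radical class of the upper radical `r^K` determined by `K`: the
g.m.rings which cannot be g.m.homomorphically mapped onto a non-zero member
of `K`. -/
def UpperRadicalClass (K : ∀ I₀ : Type u, GammaSystem.{u, v} I₀ → Prop)
    (I : Type u) (S : GammaSystem I) : Prop :=
  ¬ MapsOntoNonzeroMember K S

/-- A g.m.weakly special class: (WS1) every member is a semiprime ring;
(WS2) g.m.ideals of members are members; (WS3) if a g.m.ideal `B` of `A`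
is in the class, then `A//B*` is in the class. -/
def IsGMWeaklySpecial (K : ∀ I₀ : Type u, GammaSystem.{u, v} I₀ → Prop) : Prop :=
  (∀ (I₀ : Type u) (S : GammaSystem I₀), K I₀ S → IsSemiprimeRing (GMRing S)) ∧
  (∀ (I₀ : Type u) (S : GammaSystem I₀) (B : GMIdeal S), K I₀ S → K I₀ B.toSystem) ∧
  (∀ (I₀ : Type u) (S : GammaSystem I₀) (B : GMIdeal S),
      K I₀ B.toSystem → K I₀ B.ann.quotSystem)

/-- A g.m.special class: (S1) every member is a prime ring;
(S2) g.m.ideals of members are members; (S3) if a g.m.ideal `B` of `A`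
is in the class, then `A//B*` is in the class. -/
def IsGMSpecial (K : ∀ I₀ : Type u, GammaSystem.{u, v} I₀ → Prop) : Prop :=
  (∀ (I₀ : Type u) (S : GammaSystem I₀), K I₀ S → IsPrimeRing (GMRing S)) ∧
  (∀ (I₀ : Type u) (S : GammaSystem I₀) (B : GMIdeal S), K I₀ S → K I₀ B.toSystem) ∧
  (∀ (I₀ : Type u) (S : GammaSystem I₀) (B : GMIdeal S),
      K I₀ B.toSystem → K I₀ B.ann.quotSystem)

end RadicalTheory

section RingClasses

/-- A weakly special class of (possibly non-unital) rings: members are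
semiprime, two-sided ideals of members are members (as rings), and if a
two-sided ideal `B` of `A` is a member then `A/B*` is a member. -/
def IsWeaklySpecialRingClass (K : ∀ (R : Type w) [NonUnitalRing R], Prop) : Prop :=
  (∀ (R : Type w) [NonUnitalRing R], K R → IsSemiprimeRing R) ∧
  (∀ (R : Type w) [NonUnitalRing R] (B : TwoSidedIdeal R), K R → K B) ∧
  (∀ (R : Type w) [NonUnitalRing R] (B : TwoSidedIdeal R),
      K B → K B.annihilator.ringCon.Quotient)

/-- A special class of rings: a weakly special class all of whose members are
prime rings. -/
def IsSpecialRingClass (K : ∀ (R : Type w) [NonUnitalRing R], Prop) : Prop :=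
  (∀ (R : Type w) [NonUnitalRing R], K R → IsPrimeRing R) ∧
  (∀ (R : Type w) [NonUnitalRing R] (B : TwoSidedIdeal R), K R → K B) ∧
  (∀ (R : Type w) [NonUnitalRing R] (B : TwoSidedIdeal R),
      K B → K B.annihilator.ringCon.Quotient)

/-- The (upper) radical of the ring `R` determined by a class `K` of rings:
the intersection of all two-sided ideals `B` with `R/B ∈ K`. -/
def ringRadical (K : ∀ (R : Type w) [NonUnitalRing R], Prop)
    (R : Type w) [NonUnitalRing R] : Set R :=
  { x | ∀ B : TwoSidedIdeal R, K B.ringCon.Quotient → x ∈ B }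

/-- A radical property of rings: closure under surjective homomorphic images,
existence of a largest `r`-ideal, and `r`-semisimplicity of the quotient by it. -/
def IsRingRadicalProperty (K : ∀ (R : Type w) [NonUnitalRing R], Prop) : Prop :=
  (∀ (R S : Type w) [NonUnitalRing R] [NonUnitalRing S] (f : R →ₙ+* S),
      Function.Surjective f → K R → K S) ∧
  (∀ (R : Type w) [NonUnitalRing R], ∃ B : TwoSidedIdeal R,
      K B ∧ (∀ C : TwoSidedIdeal R, K C → C ≤ B) ∧
      ∀ D : TwoSidedIdeal B.ringCon.Quotient, K D → D = ⊥)

end RingClasses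

/-- An ideal of the `A_{ts}`-ring `A_{st}` (a `Γ`-ring with `M = A_{st}`,
`Γ = A_{ts}`): an additive subgroup `B` with `B·A_{ts}·A_{st} ⊆ B` and
`A_{st}·A_{ts}·B ⊆ B`. -/
structure GammaIdeal (S : GammaSystem I) (s t : I) where
  carrier : AddSubgroup (S.A s t)
  mul_mem_right : ∀ b ∈ carrier, ∀ (u : S.A t s) (y : S.A s t),
    S.mul (S.mul b u) y ∈ carrier
  mul_mem_left : ∀ (x : S.A s t) (u : S.A t s), ∀ b ∈ carrier,
    S.mul (S.mul x u) b ∈ carrier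

/-!
If `a ∉ P` for a prime ideal `P`, then `a u a ∉ P` for some `u`, so `a` starts an `m`-sequence
avoiding `P`; conversely an ideal maximal among those avoiding a nowhere-zero `m`-sequence is
prime. Hence the Baer radical of a ring is its set of `m`-nilpotent elements.

In the g.m.ring, `e_{ij}(c) u e_{ij}(c) = e_{ij}(c u_{ji} c)`, and the `(i,j)`-entry of
`x e_{ji}(v) x` is `x_{ij} v x_{ij}`. So `m`-sequences pass between `A` and its components, and
`x ∈ r_b(A)` iff every entry `x_{ij}` is `m`-nilpotent. For `\bar r_b(A)`, the maximality
argument, run over g.m.ideals avoiding an `m`-sequence of `A_{ij}`, produces `B` with `A//B`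
prime; conversely, an `m`-nilpotent entry gives an `m`-nilpotent matrix unit of the prime ring
`A//B`, which must be `0`.
-/

section MNilpotence

variable {M Γ : Type*} [Zero M]

/-- `IsMNilpotent` and `GammaSystem.MNilpotent` are the cases `t a u b = a * u * b` and
`t a u b = S.mul (S.mul a u) b`, definitionally. -/
def IsMNilpotentFor (t : M → Γ → M → M) (x : M) : Prop :=
  ∀ a : ℕ → M, a 0 = x → (∀ n, ∃ u, a (n + 1) = t (a n) u (a n)) → ∃ k, a k = 0

theorem IsMNilpotentFor.map {M' Γ' : Type*} [Zero M'] {t : M → Γ → M → M}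
    {t' : M' → Γ' → M' → M'} (φ : M → M') (hφ0 : φ 0 = 0)
    (hφ : ∀ x v, ∃ u, φ (t x u x) = t' (φ x) v (φ x)) {x : M} (hx : IsMNilpotentFor t x) :
    IsMNilpotentFor t' (φ x) := by
  intro b hb0 hb
  choose v hv using hb
  choose u hu using hφ
  let a : ℕ → M := fun n => Nat.rec x (fun n an => t an (u an (v n)) an) n
  have hab : ∀ n, φ (a n) = b n := by
    intro n
    induction n with
    | zero => exact hb0.symm
    | succ n ih => rw [hv n, ← ih]; exact hu _ _
  obtain ⟨k, hk⟩ := hx a rfl fun n => ⟨_, rfl⟩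
  exact ⟨k, by rw [← hab k, hk, hφ0]⟩

end MNilpotence

namespace TwoSidedIdeal

variable {R : Type w} [NonUnitalRing R]

def leftColon (P C : TwoSidedIdeal R) : TwoSidedIdeal R :=
  mk' {x | ∀ y ∈ C, x * y ∈ P}
    (fun y _ => by rw [zero_mul]; exact P.zero_mem)
    (fun hx hx' y hy => by rw [add_mul]; exact P.add_mem (hx y hy) (hx' y hy))
    (fun hx y hy => by rw [neg_mul]; exact P.neg_mem (hx y hy))
    (fun {s x} hx y hy => by rw [mul_assoc]; exact P.mul_mem_left s _ (hx y hy))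
    (fun {x s} hx y hy => by rw [mul_assoc]; exact hx _ (C.mul_mem_left s y hy))

theorem mem_leftColon {P C : TwoSidedIdeal R} {x : R} :
    x ∈ P.leftColon C ↔ ∀ y ∈ C, x * y ∈ P :=
  mem_mk' ..

theorem IsPrimeIdeal.mem_of_forall_mul_mem {P : TwoSidedIdeal R} (hP : P.IsPrimeIdeal) {x : R}
    (hx : ∀ r, x * r ∈ P) : x ∈ P := by
  rcases hP (P.leftColon ⊤) ⊤ (fun b hb c hc => mem_leftColon.1 hb c hc) with h | h
  · exact h (mem_leftColon.2 fun r _ => hx r)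
  · exact h trivial

theorem IsPrimeIdeal.mem_of_forall_mul_mul_mem {P : TwoSidedIdeal R} (hP : P.IsPrimeIdeal)
    {a : R} (ha : ∀ r, a * r * a ∈ P) : a ∈ P := by
  let C : TwoSidedIdeal R := mk' {y | ∀ r, a * r * y ∈ P}
    (fun r => by rw [mul_zero]; exact P.zero_mem)
    (fun hy hy' r => by rw [mul_add]; exact P.add_mem (hy r) (hy' r))
    (fun hy r => by rw [mul_neg]; exact P.neg_mem (hy r))
    (fun {s y} hy r => by rw [← mul_assoc, mul_assoc a]; exact hy (r * s))
    (fun {y s} hy r => by rw [← mul_assoc]; exact P.mul_mem_right _ s (hy r))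
  have haC : a ∈ C := (mem_mk' ..).2 ha
  rcases hP (P.leftColon C) C (fun b hb c hc => mem_leftColon.1 hb c hc) with h | h
  · exact hP.mem_of_forall_mul_mem fun r => h (mem_leftColon.2 fun y hy => (mem_mk' ..).1 hy r)
  · exact h haC

theorem IsPrimeIdeal.mem_of_isMNilpotent {P : TwoSidedIdeal R} (hP : P.IsPrimeIdeal) {x : R}
    (hx : IsMNilpotent x) : x ∈ P := by
  by_contra hxP
  have hstep (y : {y : R // y ∉ P}) : ∃ u, y.1 * u * y.1 ∉ P := by
    by_contra! h
    exact y.2 (hP.mem_of_forall_mul_mul_mem h)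
  choose u hu using hstep
  let a : ℕ → {y : R // y ∉ P} := fun n => (fun y => ⟨_, hu y⟩)^[n] ⟨x, hxP⟩
  obtain ⟨k, hk⟩ := hx (fun n => (a n).1) rfl fun n =>
    ⟨u (a n), by simp only [a, Function.iterate_succ_apply']⟩
  exact (a k).2 (hk ▸ P.zero_mem)

theorem exists_maximal_forall_notMem {ι : Type*} {a : ι → R} (ha : ∀ n, a n ≠ 0) :
    ∃ P : TwoSidedIdeal R, Maximal (fun P : TwoSidedIdeal R => ∀ n, a n ∉ P) P := by
  obtain ⟨P, -, hP⟩ := zorn_le_nonempty₀ {P : TwoSidedIdeal R | ∀ n, a n ∉ P}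
    (fun c hc hchain Q hQ => by
      refine ⟨mk' {x | ∃ P ∈ c, x ∈ P} ⟨Q, hQ, Q.zero_mem⟩ ?_
        (fun ⟨P, hP, hx⟩ => ⟨P, hP, P.neg_mem hx⟩)
        (fun ⟨P, hP, hy⟩ => ⟨P, hP, P.mul_mem_left _ _ hy⟩)
        (fun ⟨P, hP, hx⟩ => ⟨P, hP, P.mul_mem_right _ _ hx⟩), ?_, ?_⟩
      · rintro x y ⟨P₁, hP₁, hx⟩ ⟨P₂, hP₂, hy⟩
        rcases hchain.total hP₁ hP₂ with h | h
        · exact ⟨P₂, hP₂, P₂.add_mem (h hx) hy⟩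
        · exact ⟨P₁, hP₁, P₁.add_mem hx (h hy)⟩
      · rintro n hn
        obtain ⟨P, hP, hmem⟩ := (mem_mk' ..).1 hn
        exact hc hP n hmem
      · exact fun P hP x hx => (mem_mk' ..).2 ⟨P, hP, hx⟩)
    ⊥ fun n hn => ha n ((mem_bot R).1 hn)
  exact ⟨P, hP⟩

theorem mem_of_mSeq_mem {a u : ℕ → R} (hu : ∀ n, a (n + 1) = a n * u n * a n)
    {Q : TwoSidedIdeal R} {m k : ℕ} (hmk : m ≤ k) (hm : a m ∈ Q) : a k ∈ Q := by
  induction k, hmk using Nat.le_induction with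
  | base => exact hm
  | succ k _ ih => rw [hu k]; exact Q.mul_mem_right _ _ (Q.mul_mem_right _ _ ih)

/-- If `B, C ⊄ P` then `a_m ∈ P + B` and `a_n ∈ P + C`, so for `k = max m n` the term
`a_{k+1} = a_k u_k a_k` lies in `(P + B)(P + C) ⊆ P + BC`. -/
theorem isPrimeIdeal_of_maximal_forall_notMem {a u : ℕ → R}
    (hu : ∀ n, a (n + 1) = a n * u n * a n) {P : TwoSidedIdeal R}
    (hP : Maximal (fun P : TwoSidedIdeal R => ∀ n, a n ∉ P) P) : P.IsPrimeIdeal := by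
  have hmeet {D : TwoSidedIdeal R} (hD : ¬D ≤ P) : ∃ m, a m ∈ P ⊔ D := by
    by_contra! h
    exact hD (le_sup_right.trans (hP.2 h le_sup_left))
  intro B C hBC
  by_contra! hBC'
  obtain ⟨m, hm⟩ := hmeet hBC'.1
  obtain ⟨n, hn⟩ := hmeet hBC'.2
  apply hP.1 (max m n + 1)
  obtain ⟨p, hp, b, hb, hpb⟩ :=
    mem_sup.1 ((P ⊔ B).mul_mem_right _ (u _) (mem_of_mSeq_mem hu (le_max_left m n) hm))
  obtain ⟨q, hq, c, hc, hqc⟩ := mem_sup.1 (mem_of_mSeq_mem hu (le_max_right m n) hn)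
  rw [hu, ← hpb, ← hqc, add_mul, mul_add b]
  exact P.add_mem (P.mul_mem_right _ _ hp) (P.add_mem (P.mul_mem_left _ _ hq) (hBC b hb c hc))

end TwoSidedIdeal

section BaerRadical

variable {R : Type w} [NonUnitalRing R]

open TwoSidedIdeal in
theorem mem_baerRadical_iff {x : R} : x ∈ baerRadical R ↔ IsMNilpotent x := by
  refine ⟨fun hx a ha0 hstep => ?_, fun hx P hP => hP.mem_of_isMNilpotent hx⟩
  by_contra! hne
  choose u hu using hstep
  obtain ⟨P, hP⟩ := exists_maximal_forall_notMem hne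
  exact hP.1 0 (ha0 ▸ hx P (isPrimeIdeal_of_maximal_forall_notMem hu hP))

def baerIdeal (R : Type w) [NonUnitalRing R] : TwoSidedIdeal R := sInf {P | P.IsPrimeIdeal}

theorem mem_baerIdeal {x : R} : x ∈ baerIdeal R ↔ x ∈ baerRadical R :=
  TwoSidedIdeal.mem_sInf R

theorem IsPrimeRing.eq_zero_of_isMNilpotent (hR : IsPrimeRing R) {x : R} (hx : IsMNilpotent x) :
    x = 0 := by
  refine (TwoSidedIdeal.mem_bot R).1 (TwoSidedIdeal.IsPrimeIdeal.mem_of_isMNilpotent ?_ hx)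
  intro B C hBC
  exact (hR B C fun b hb c hc => (TwoSidedIdeal.mem_bot R).1 (hBC b hb c hc)).imp le_of_eq le_of_eq

end BaerRadical

namespace GMRing

open scoped Classical

variable {S : GammaSystem I}

theorem single_mul_single {i j k : I} (a : S.A i j) (b : S.A j k) :
    (DFinsupp.single (i, j) a : GMRing S) * DFinsupp.single (j, k) b =
      DFinsupp.single (i, k) (S.mul a b) := by
  change S.gmul _ _ = _
  rw [S.gmul_single_single, dif_pos rfl]
  rfl

theorem single_mul_single_of_ne {i j k l : I} (h : j ≠ k) (a : S.A i j) (b : S.A k l) :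
    (DFinsupp.single (i, j) a : GMRing S) * DFinsupp.single (k, l) b = 0 := by
  change S.gmul _ _ = _
  rw [S.gmul_single_single, dif_neg h]

theorem single_mul_apply {i j : I} (a : S.A i j) (y : GMRing S) (m : I) :
    ((DFinsupp.single (i, j) a : GMRing S) * y) (i, m) = S.mul a (y (j, m)) := by
  induction y using DFinsupp.induction with
  | h0 => simp only [mul_zero, DFinsupp.zero_apply, S.mul_zero']
  | ha q b f _ _ ih =>
    rw [mul_add, DFinsupp.add_apply, DFinsupp.add_apply, S.mul_add, ih]
    congr 1
    obtain ⟨k, l⟩ := q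
    by_cases hjk : j = k
    · subst hjk
      rw [single_mul_single]
      by_cases hlm : l = m
      · subst hlm
        simp only [DFinsupp.single_eq_same]
      · rw [DFinsupp.single_eq_of_ne (by simp [Ne.symm hlm]),
          DFinsupp.single_eq_of_ne (by simp [Ne.symm hlm]), S.mul_zero']
    · rw [single_mul_single_of_ne hjk, DFinsupp.single_eq_of_ne (by simp [hjk]),
        S.mul_zero']
      rfl

theorem single_mul_apply_of_ne {i j : I} (a : S.A i j) (y : GMRing S) {q : I × I}
    (hq : q.1 ≠ i) : ((DFinsupp.single (i, j) a : GMRing S) * y) q = 0 := by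
  induction y using DFinsupp.induction with
  | h0 => rw [mul_zero]; rfl
  | ha r b f _ _ ih =>
    rw [mul_add, DFinsupp.add_apply, ih, add_zero]
    obtain ⟨k, l⟩ := r
    by_cases hjk : j = k
    · subst hjk
      rw [single_mul_single, DFinsupp.single_eq_of_ne]
      rintro rfl
      exact hq rfl
    · rw [single_mul_single_of_ne hjk]; rfl

theorem mul_single_apply {j k : I} (b : S.A j k) (y : GMRing S) (m : I) :
    (y * (DFinsupp.single (j, k) b : GMRing S)) (m, k) = S.mul (y (m, j)) b := by
  induction y using DFinsupp.induction with
  | h0 => simp only [zero_mul, DFinsupp.zero_apply, S.zero_mul']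
  | ha q a f _ _ ih =>
    rw [add_mul, DFinsupp.add_apply, DFinsupp.add_apply, S.add_mul, ih]
    congr 1
    obtain ⟨l, i⟩ := q
    by_cases hij : i = j
    · subst hij
      rw [single_mul_single]
      by_cases hlm : l = m
      · subst hlm
        simp only [DFinsupp.single_eq_same]
      · rw [DFinsupp.single_eq_of_ne (by simp [Ne.symm hlm]),
          DFinsupp.single_eq_of_ne (by simp [Ne.symm hlm]), S.zero_mul']
    · rw [single_mul_single_of_ne hij, DFinsupp.single_eq_of_ne (by simp [Ne.symm hij]),
        S.zero_mul']
      rfl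

theorem mul_single_apply_of_ne {j k : I} (b : S.A j k) (y : GMRing S) {q : I × I}
    (hq : q.2 ≠ k) : (y * (DFinsupp.single (j, k) b : GMRing S)) q = 0 := by
  induction y using DFinsupp.induction with
  | h0 => rw [zero_mul]; rfl
  | ha r a f _ _ ih =>
    rw [add_mul, DFinsupp.add_apply, ih, add_zero]
    obtain ⟨l, i⟩ := r
    by_cases hij : i = j
    · subst hij
      rw [single_mul_single, DFinsupp.single_eq_of_ne]
      rintro rfl
      exact hq rfl
    · rw [single_mul_single_of_ne hij]; rfl

theorem single_mul_mul_single {i j k l : I} (a : S.A i j) (u : GMRing S) (b : S.A k l) :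
    (DFinsupp.single (i, j) a : GMRing S) * u * DFinsupp.single (k, l) b =
      DFinsupp.single (i, l) (S.mul (S.mul a (u (j, k))) b) := by
  ext ⟨m, n⟩
  by_cases hn : n = l
  · subst hn
    rw [mul_single_apply]
    by_cases hm : m = i
    · subst hm
      rw [single_mul_apply, DFinsupp.single_eq_same]
    · rw [single_mul_apply_of_ne _ _ hm, S.zero_mul', DFinsupp.single_eq_of_ne (by simp [hm])]
  · rw [mul_single_apply_of_ne _ _ (q := (m, n)) hn, DFinsupp.single_eq_of_ne (by simp [hn])]

theorem mul_single_mul_apply (x : GMRing S) {i j : I} (v : S.A j i) (y : GMRing S) :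
    (x * (DFinsupp.single (j, i) v : GMRing S) * y) (i, j) =
      S.mul (S.mul (x (i, j)) v) (y (i, j)) := by
  induction x using DFinsupp.induction with
  | h0 => simp only [zero_mul, DFinsupp.zero_apply, S.zero_mul']
  | ha p c f _ _ ih =>
    rw [add_mul, add_mul, DFinsupp.add_apply, DFinsupp.add_apply, S.add_mul, S.add_mul, ih]
    congr 1
    obtain ⟨k, l⟩ := p
    by_cases hlj : l = j
    · subst hlj
      rw [single_mul_single]
      by_cases hki : k = i
      · subst hki
        rw [single_mul_apply, DFinsupp.single_eq_same]
      · rw [single_mul_apply_of_ne _ _ (Ne.symm hki),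
          DFinsupp.single_eq_of_ne (by simp [Ne.symm hki]), S.zero_mul', S.zero_mul']
    · rw [single_mul_single_of_ne hlj, zero_mul, DFinsupp.single_eq_of_ne (by simp [Ne.symm hlj]),
        S.zero_mul', S.zero_mul']
      rfl

theorem mNilpotent_apply {x : GMRing S} (hx : IsMNilpotent x) (i j : I) :
    S.MNilpotent i j (x (i, j)) :=
  IsMNilpotentFor.map (t := fun a u b : GMRing S => a * u * b)
    (t' := fun a u b => S.mul (S.mul a u) b) (fun y => y (i, j)) rfl
    (fun y v => ⟨DFinsupp.single (j, i) v, mul_single_mul_apply y v y⟩) hx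

theorem isMNilpotent_single_iff {i j : I} (c : S.A i j) :
    IsMNilpotent (DFinsupp.single (i, j) c : GMRing S) ↔ S.MNilpotent i j c := by
  refine ⟨fun h => by simpa using mNilpotent_apply h i j, fun h => ?_⟩
  exact IsMNilpotentFor.map (t := fun (a : S.A i j) (u : S.A j i) b => S.mul (S.mul a u) b)
    (t' := fun a u b : GMRing S => a * u * b) (fun d => DFinsupp.single (i, j) d)
    (DFinsupp.single_zero _)
    (fun y v => ⟨v (j, i), (single_mul_mul_single y v y).symm⟩) h

theorem single_mem_baerRadical_iff {i j : I} (c : S.A i j) :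
    (DFinsupp.single (i, j) c : GMRing S) ∈ baerRadical (GMRing S) ↔ S.MNilpotent i j c := by
  rw [mem_baerRadical_iff, isMNilpotent_single_iff]

theorem mem_baerRadical_iff {x : GMRing S} :
    x ∈ baerRadical (GMRing S) ↔ ∀ i j : I, S.MNilpotent i j (x (i, j)) := by
  refine ⟨fun hx => mNilpotent_apply (_root_.mem_baerRadical_iff.1 hx), fun hx P hP => ?_⟩
  rw [← DFinsupp.sum_single (f := x)]
  exact sum_mem fun ⟨i, j⟩ _ => (single_mem_baerRadical_iff _).2 (hx i j) P hP

end GMRing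

theorem GMHom.map_zero {S T : GammaSystem I} (ψ : GMHom S T) {i j : I} : ψ.f i j 0 = 0 := by
  have h := ψ.map_add (0 : S.A i j) 0
  rw [add_zero] at h
  exact left_eq_add.1 h

theorem GMHom.mNilpotent_map {S T : GammaSystem I} (ψ : GMHom S T) {i j : I}
    (hψ : Function.Surjective (ψ.f j i)) {x : S.A i j} (hx : S.MNilpotent i j x) :
    T.MNilpotent i j (ψ.f i j x) :=
  IsMNilpotentFor.map (t := fun a u b => S.mul (S.mul a u) b)
    (t' := fun a u b => T.mul (T.mul a u) b) (ψ.f i j) ψ.map_zero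
    (fun y v => (hψ v).imp fun u hu => by rw [ψ.map_mul, ψ.map_mul, hu]) hx

namespace GMIdeal

variable {S : GammaSystem I}

def mkHom (N : GMIdeal S) : GMHom S N.quotSystem where
  f _ _ := QuotientAddGroup.mk
  map_add _ _ := rfl
  map_mul _ _ := rfl

theorem mkHom_surjective (N : GMIdeal S) : N.mkHom.Surjective :=
  fun _ _ => QuotientAddGroup.mk_surjective

end GMIdeal

section BaerGMIdeal

open scoped Classical

variable (S : GammaSystem I)

/-- `c ∈ B_{ij}` iff the matrix unit `e_{ij}(c)` lies in `r_b(A)`, so that the g.m.ideal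
closure properties are inherited from the ideal `r_b(A)`. -/
noncomputable def baerGMIdeal : GMIdeal S where
  B i j := (AddSubgroup.ofClass (baerIdeal (GMRing S))).comap
    (DFinsupp.singleAddHom (fun p : I × I => S.A p.1 p.2) (i, j))
  mul_mem_right c z hc := by
    change DFinsupp.single _ _ ∈ baerIdeal _
    rw [← GMRing.single_mul_single]
    exact TwoSidedIdeal.mul_mem_right _ _ _ hc
  mul_mem_left c z hz := by
    change DFinsupp.single _ _ ∈ baerIdeal _
    rw [← GMRing.single_mul_single]
    exact TwoSidedIdeal.mul_mem_left _ _ _ hz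

variable {S}

theorem mem_baerGMIdeal {i j : I} {c : S.A i j} :
    c ∈ (baerGMIdeal S).B i j ↔ S.MNilpotent i j c :=
  mem_baerIdeal.trans (GMRing.single_mem_baerRadical_iff c)

end BaerGMIdeal

namespace GMIdeal

open scoped Classical

variable {S : GammaSystem I}

theorem single_mem_carrier (N : GMIdeal S) {p : I × I} {c : S.A p.1 p.2}
    (hc : c ∈ N.B p.1 p.2) : (DFinsupp.single p c : GMRing S) ∈ N.carrier := by
  intro q
  by_cases h : q = p
  · subst h
    rwa [DFinsupp.single_eq_same]
  · rw [DFinsupp.single_eq_of_ne h]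
    exact (N.B q.1 q.2).zero_mem

/-- Multipliers of an `m`-sequence in the ring `N` must lie in `N`. The even terms of an
`m`-sequence `b` of `c ∈ N_{ij}` form one, since `b_{2n+2} = b_{2n} e_n b_{2n}` with
`e_n = u_{2n} b_{2n} u_{2n+1} b_{2n} u_{2n} ∈ N_{ji}`. -/
theorem IsBaerGMIdeal.mNilpotent {N : GMIdeal S} (hN : N.IsBaerGMIdeal) {i j : I} {c : S.A i j}
    (hc : c ∈ N.B i j) : S.MNilpotent i j c := by
  intro b hb0 hb
  choose u hu using hb
  have hbN (n : ℕ) : b n ∈ N.B i j := by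
    induction n with
    | zero => exact hb0 ▸ hc
    | succ n ih => rw [hu]; exact N.mul_mem_right _ _ (N.mul_mem_right _ _ ih)
  let e (n : ℕ) : S.A j i :=
    S.mul (S.mul (S.mul (S.mul (u (2 * n)) (b (2 * n))) (u (2 * n + 1))) (b (2 * n))) (u (2 * n))
  have heN (n : ℕ) : e n ∈ N.B j i :=
    N.mul_mem_right _ _ (N.mul_mem_right _ _ (N.mul_mem_right _ _ (N.mul_mem_left _ _ (hbN _))))
  have heven (n : ℕ) : b (2 * (n + 1)) = S.mul (S.mul (b (2 * n)) (e n)) (b (2 * n)) := by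
    rw [show 2 * (n + 1) = 2 * n + 1 + 1 by ring, hu, hu]
    simp only [S.mul_assoc, e]
  obtain ⟨k, hk⟩ := hN _ (N.single_mem_carrier (p := (i, j)) hc)
    (fun n => DFinsupp.single (i, j) (b (2 * n))) (fun n => N.single_mem_carrier (hbN _))
    (by rw [mul_zero, hb0])
    fun n => ⟨DFinsupp.single (j, i) (e n), N.single_mem_carrier (p := (j, i)) (heN n), by
      rw [GMRing.single_mul_mul_single, DFinsupp.single_eq_same, heven]⟩
  exact ⟨2 * k, by simpa using hk⟩

theorem B_injective : Function.Injective (GMIdeal.B (S := S)) := by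
  rintro ⟨B, _, _⟩ ⟨B', _, _⟩ rfl
  rfl

instance : PartialOrder (GMIdeal S) := PartialOrder.lift GMIdeal.B B_injective

instance : Bot (GMIdeal S) where
  bot :=
    { B := fun _ _ => ⊥
      mul_mem_right := fun x z hx => by
        rw [AddSubgroup.mem_bot] at hx ⊢
        rw [hx, S.zero_mul']
      mul_mem_left := fun x z hz => by
        rw [AddSubgroup.mem_bot] at hz ⊢
        rw [hz, S.mul_zero'] }

theorem exists_maximal_forall_notMem {i j : I} {ι : Type*} {b : ι → S.A i j}
    (hb : ∀ n, b n ≠ 0) :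
    ∃ B : GMIdeal S, Maximal (fun B : GMIdeal S => ∀ n, b n ∉ B.B i j) B := by
  obtain ⟨B, -, hB⟩ := zorn_le_nonempty₀ {B : GMIdeal S | ∀ n, b n ∉ B.B i j}
    (fun c hc hchain D hD => by
      let U : GMIdeal S :=
        { B := fun k l =>
            { carrier := {v | ∃ B ∈ c, v ∈ B.B k l}
              zero_mem' := ⟨D, hD, zero_mem _⟩
              add_mem' := by
                rintro x y ⟨B₁, hB₁, hx⟩ ⟨B₂, hB₂, hy⟩
                rcases hchain.total hB₁ hB₂ with h | h
                · exact ⟨B₂, hB₂, add_mem (h k l hx) hy⟩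
                · exact ⟨B₁, hB₁, add_mem hx (h k l hy)⟩
              neg_mem' := fun ⟨B, hB, hx⟩ => ⟨B, hB, neg_mem hx⟩ }
          mul_mem_right := fun x z ⟨B, hB, hx⟩ => ⟨B, hB, B.mul_mem_right x z hx⟩
          mul_mem_left := fun x z ⟨B, hB, hz⟩ => ⟨B, hB, B.mul_mem_left x z hz⟩ }
      exact ⟨U, fun n ⟨B, hB, hmem⟩ => hc hB n hmem, fun B hB k l v hv => ⟨B, hB, hv⟩⟩)
    ⊥ fun n hn => hb n ((AddSubgroup.mem_bot).1 hn)
  exact ⟨B, hB⟩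

def comapIdeal (B : GMIdeal S) (W : TwoSidedIdeal (GMRing B.quotSystem)) : GMIdeal S where
  B i j :=
    { carrier := {v | ∃ y ∈ W, y (i, j) = B.mkHom.f i j v}
      zero_mem' := ⟨0, W.zero_mem, B.mkHom.map_zero.symm⟩
      add_mem' := fun ⟨y, hy, hyv⟩ ⟨z, hz, hzw⟩ => ⟨y + z, W.add_mem hy hz,
        by rw [DFinsupp.add_apply, hyv, hzw, B.mkHom.map_add]⟩
      neg_mem' := fun ⟨y, hy, hyv⟩ => ⟨-y, W.neg_mem hy,
        by rw [DFinsupp.neg_apply, hyv]; exact (QuotientAddGroup.mk_neg ..).symm⟩ }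
  mul_mem_right {i j k} v z := fun ⟨y, hy, hyv⟩ =>
    ⟨y * (DFinsupp.single (j, k) (B.mkHom.f j k z) : GMRing B.quotSystem),
      W.mul_mem_right _ _ hy, by rw [GMRing.mul_single_apply, hyv, B.mkHom.map_mul]⟩
  mul_mem_left {i j k} v z := fun ⟨y, hy, hyz⟩ =>
    ⟨(DFinsupp.single (i, j) (B.mkHom.f i j v) : GMRing B.quotSystem) * y,
      W.mul_mem_left _ _ hy, by rw [GMRing.single_mul_apply, hyz, B.mkHom.map_mul]⟩

theorem mem_comapIdeal {B : GMIdeal S} {W : TwoSidedIdeal (GMRing B.quotSystem)} {i j : I}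
    {v : S.A i j} :
    v ∈ (B.comapIdeal W).B i j ↔ ∃ y ∈ W, y (i, j) = B.mkHom.f i j v :=
  Iff.rfl

theorem le_comapIdeal (B : GMIdeal S) (W : TwoSidedIdeal (GMRing B.quotSystem)) :
    B ≤ B.comapIdeal W :=
  fun _ _ v hv => ⟨0, W.zero_mem, ((QuotientAddGroup.eq_zero_iff v).2 hv).symm⟩

theorem eq_bot_of_comapIdeal_le {B : GMIdeal S} {W : TwoSidedIdeal (GMRing B.quotSystem)}
    (h : B.comapIdeal W ≤ B) : W = ⊥ := by
  refine TwoSidedIdeal.ext fun y =>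
    ⟨fun hy => ?_, fun hy => (TwoSidedIdeal.mem_bot _).1 hy ▸ W.zero_mem⟩
  refine (TwoSidedIdeal.mem_bot _).2 (DFinsupp.ext fun ⟨i, j⟩ => ?_)
  obtain ⟨v, hv⟩ := QuotientAddGroup.mk_surjective (y (i, j))
  rw [← hv]
  exact (QuotientAddGroup.eq_zero_iff v).2 (h i j ⟨y, hy, hv.symm⟩)

/-- The quotient is prime because two non-zero ideals of it pull back to g.m.ideals strictly
above `B`, which by maximality contain terms `b_m`, `b_n`; the `m`-sequence property then
puts `b_{k+1}`, `k = max m n`, into `B`. -/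
theorem isPrimeRing_quotSystem_of_maximal {i j : I} {b : ℕ → S.A i j} {u : ℕ → S.A j i}
    (hu : ∀ n, b (n + 1) = S.mul (S.mul (b n) (u n)) (b n)) {B : GMIdeal S}
    (hB : Maximal (fun B : GMIdeal S => ∀ n, b n ∉ B.B i j) B) :
    IsPrimeRing (GMRing B.quotSystem) := by
  have hmono {D : GMIdeal S} {m k : ℕ} (hmk : m ≤ k) (hm : b m ∈ D.B i j) :
      b k ∈ D.B i j := by
    induction k, hmk using Nat.le_induction with
    | base => exact hm
    | succ k _ ih => rw [hu k]; exact D.mul_mem_right _ _ (D.mul_mem_right _ _ ih)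
  have hmeet {W : TwoSidedIdeal (GMRing B.quotSystem)} (hW : W ≠ ⊥) :
      ∃ m, b m ∈ (B.comapIdeal W).B i j := by
    by_contra! h
    exact hW (eq_bot_of_comapIdeal_le (hB.2 h (B.le_comapIdeal W)))
  intro U V hUV
  by_contra! hUV'
  obtain ⟨m, hm⟩ := hmeet hUV'.1
  obtain ⟨n, hn⟩ := hmeet hUV'.2
  obtain ⟨y, hyU, hy⟩ := mem_comapIdeal.1 (hmono (le_max_left m n) hm)
  obtain ⟨z, hzV, hz⟩ := mem_comapIdeal.1 (hmono (le_max_right m n) hn)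
  let w : GMRing B.quotSystem := DFinsupp.single (j, i) (B.mkHom.f j i (u (max m n)))
  have hyz : y * w * z = 0 := hUV _ (U.mul_mem_right _ w hyU) z hzV
  apply hB.1 (max m n + 1)
  rw [← QuotientAddGroup.eq_zero_iff]
  calc B.mkHom.f i j (b (max m n + 1)) = (y * w * z) (i, j) := by
        rw [GMRing.mul_single_mul_apply, hy, hz, hu, B.mkHom.map_mul, B.mkHom.map_mul]
    _ = 0 := by rw [hyz]; rfl

end GMIdeal

section BaerRadicalOfGMRing

variable (S : GammaSystem I)

theorem baerGMIdeal_carrier : (baerGMIdeal S).carrier = baerRadical (GMRing S) := by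
  ext x
  simp only [GMIdeal.carrier, Set.mem_ofPred_eq, Prod.forall, mem_baerGMIdeal,
    GMRing.mem_baerRadical_iff]

theorem baerGMIdeal_isBaerGMIdeal : (baerGMIdeal S).IsBaerGMIdeal := by
  intro x hx a hmem ha0 hstep
  rw [baerGMIdeal_carrier] at hx
  exact mem_baerRadical_iff.1 hx a ha0 fun n => (hstep n).imp fun _ hu => hu.2

theorem gmBarBaer_subset_baerRadical : gmBarBaer S ⊆ baerRadical (GMRing S) := by
  intro x hx
  rw [GMRing.mem_baerRadical_iff]
  intro i j b hb0 hb
  by_contra! hne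
  choose u hu using hb
  obtain ⟨B, hB⟩ := GMIdeal.exists_maximal_forall_notMem hne
  exact hB.1 0 (hb0 ▸ hx B (GMIdeal.isPrimeRing_quotSystem_of_maximal hu hB) (i, j))

open scoped Classical in
theorem baerRadical_subset_gmBarBaer : baerRadical (GMRing S) ⊆ gmBarBaer S := by
  rintro x hx B hB ⟨i, j⟩
  have hxij := B.mkHom.mNilpotent_map (B.mkHom_surjective j i)
    (GMRing.mNilpotent_apply (mem_baerRadical_iff.1 hx) i j)
  have h := hB.eq_zero_of_isMNilpotent ((GMRing.isMNilpotent_single_iff _).2 hxij)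
  rw [DFinsupp.single_eq_zero] at h
  exact (QuotientAddGroup.eq_zero_iff _).1 h

end BaerRadicalOfGMRing

/-- **Theorem 3.7 (with the componentwise description).**
For the generalized matrix ring `A` of a `Γ_I`-system:
the largest g.m.ideal `N` all of whose elements are `m`-nilpotent in the ring
`N` (i.e. `g.m.r_b(A)`) exists and coincides, as a subset of `A`, with the
Baer radical `r_b(A)` of the ring `A`; the componentwise intersection
`\bar r_b(A)` of all g.m.ideals `B` with `A//B` prime also equals `r_b(A)`;
and `x = (x_{ij}) ∈ r_b(A)` iff `x_{ij} ∈ r_b(A_{ij})` for all `i, j ∈ I`. -/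
theorem baerRadical_of_gmRing {I : Type u} (S : GammaSystem.{u, v} I) :
    (∃ N : GMIdeal S, N.IsBaerGMIdeal ∧
        (∀ M : GMIdeal S, M.IsBaerGMIdeal → ∀ i j : I, M.B i j ≤ N.B i j) ∧
        N.carrier = baerRadical (GMRing S)) ∧
    gmBarBaer S = baerRadical (GMRing S) ∧
    ∀ x : GMRing S, x ∈ baerRadical (GMRing S) ↔
      ∀ i j : I, x (i, j) ∈ S.componentBaer i j := by
  refine ⟨⟨baerGMIdeal S, baerGMIdeal_isBaerGMIdeal S, ?_, baerGMIdeal_carrier S⟩,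
    (gmBarBaer_subset_baerRadical S).antisymm (baerRadical_subset_gmBarBaer S),
    fun x => GMRing.mem_baerRadical_iff⟩
  exact fun M hM i j _ hc => mem_baerGMIdeal.2 (hM.mNilpotent hc)
end

section
/- Let A = Σ{A_{ij} | i,j ∈ I} be the generalized matrix ring of a Γ_I-system. If N is a g.m.ideal of A such that every element of the ring N is m-nilpotent in N, then N_{ij} ⊆ r_b(A_{ij}) for all i,j ∈ I; consequently g.m.r_b(A) ⊆ Σ{r_b(A_{ij}) | i,j ∈ I}. -/
/-!
Generalized matrix rings (g.m.rings) of a `Γ_I`-system, their g.m.ideals,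
g.m.homomorphisms, quotients, and the general theory of radicals,
following Zhang, "The Baer radical of generalized matrix rings".
-/

universe u v w

set_option autoImplicit false
set_option maxHeartbeats 1000000

variable {I : Type u}

/-! The multipliers `u_n ∈ A_{ji}` of an `m`-sequence in `N_{ij}` need not lie in `N`. Passing to the
subsequence `a_0, a_2, a_4, …` cures this: `a_{2n+2} = a_{2n} (u_{2n} a_{2n} u_{2n+1} a_{2n} u_{2n}) a_{2n}`,
and the new multiplier contains the factor `a_{2n} ∈ N_{ij}`, so it lies in `N_{ji}`. Embedding
this subsequence into the g.m.ring as single-entry matrices gives an `m`-sequence of the ring `N`,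
which reaches `0` by hypothesis. -/

namespace GammaSystem

variable {S : GammaSystem I}

def IsMSequence {i j : I} (a : ℕ → S.A i j) (u : ℕ → S.A j i) : Prop :=
  ∀ n, a (n + 1) = S.mul (S.mul (a n) (u n)) (a n)

lemma IsMSequence.even {i j : I} {a : ℕ → S.A i j} {u : ℕ → S.A j i} (h : IsMSequence a u) :
    IsMSequence (fun n => a (2 * n)) fun n =>
      S.mul (S.mul (S.mul (S.mul (u (2 * n)) (a (2 * n))) (u (2 * n + 1))) (a (2 * n)))
        (u (2 * n)) := by
  intro n
  dsimp only
  rw [show 2 * (n + 1) = 2 * n + 1 + 1 by ring, h (2 * n + 1), h (2 * n)]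
  simp only [S.mul_assoc]

open Classical in
lemma single_mul_single {i j k : I} (c : S.A i j) (w : S.A j k) :
    (DFinsupp.single (i, j) c : GMRing S) * DFinsupp.single (j, k) w =
      DFinsupp.single (i, k) (S.mul c w) := by
  change S.gmul _ _ = _
  rw [S.gmul_single_single, dif_pos rfl]
  rfl

end GammaSystem

namespace GMIdeal

variable {S : GammaSystem I} (N : GMIdeal S)

open Classical in
lemma single_mem_carrier_s3 {i j : I} {z : S.A i j} (hz : z ∈ N.B i j) :
    DFinsupp.single (i, j) z ∈ N.carrier := by
  intro q
  by_cases h : (i, j) = q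
  · subst h
    simpa only [DFinsupp.single_eq_same] using hz
  · rw [DFinsupp.single_eq_of_ne (Ne.symm h)]
    exact zero_mem _

lemma mem_of_isMSequence {i j : I} {a : ℕ → S.A i j} {u : ℕ → S.A j i}
    (h : S.IsMSequence a u) (h0 : a 0 ∈ N.B i j) (n : ℕ) : a n ∈ N.B i j := by
  induction n with
  | zero => exact h0
  | succ n ih => rw [h n]; exact N.mul_mem_right _ _ (N.mul_mem_right _ _ ih)

open Classical in
lemma IsBaerGMIdeal.exists_eq_zero {N : GMIdeal S} (hN : N.IsBaerGMIdeal) {i j : I}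
    {a : ℕ → S.A i j} {u : ℕ → S.A j i} (h : S.IsMSequence a u) (ha : ∀ n, a n ∈ N.B i j)
    (hu : ∀ n, u n ∈ N.B j i) : ∃ k, a k = 0 := by
  obtain ⟨k, hk⟩ := hN _ (N.single_mem_carrier_s3 (ha 0)) (fun n => DFinsupp.single (i, j) (a n))
    (fun n => N.single_mem_carrier_s3 (ha n)) rfl fun n =>
      ⟨DFinsupp.single (j, i) (u n), N.single_mem_carrier_s3 (hu n), by
        rw [S.single_mul_single, S.single_mul_single, h n]⟩
  exact ⟨k, (DFinsupp.single_eq_zero (i := (i, j))).mp hk⟩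

end GMIdeal

/-- **Theorem 3.6.** If `N` is a g.m.ideal of `A` such that every element of
the ring `N` is `m`-nilpotent in `N`, then `N_{ij} ⊆ r_b(A_{ij})` for all
`i, j ∈ I`; consequently `g.m.r_b(A) ⊆ Σ{r_b(A_{ij}) | i,j ∈ I}`. -/
theorem gmBaerIdeal_le_componentBaer {I : Type u} (S : GammaSystem.{u, v} I)
    (N : GMIdeal S) (hN : N.IsBaerGMIdeal) :
    ∀ i j : I, (N.B i j : Set (S.A i j)) ⊆ S.componentBaer i j := by
  intro i j x hx a ha0 hstep
  choose u hu using hstep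
  change S.IsMSequence a u at hu
  have hmem : ∀ n, a n ∈ N.B i j := N.mem_of_isMSequence hu (ha0 ▸ hx)
  obtain ⟨k, hk⟩ := hN.exists_eq_zero hu.even (fun n => hmem (2 * n)) fun n =>
    N.mul_mem_right _ _ (N.mul_mem_right _ _ (N.mul_mem_right _ _
      (N.mul_mem_left _ _ (hmem (2 * n)))))
  exact ⟨2 * k, hk⟩
end
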